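/- An entire function f on ℂ satisfying exp(f(z)) = R(z) for some rational function R on a connected open set D ⊆ ℂ must be constant on D (hence R is constant on D). -/
import Mathlib

open Polynomial Complex

/-- If a continuous `h` satisfies `h z * B.eval z = A.eval z` everywhere with `B ≠ 0`,
then `h` is given by a polynomial. -/
lemma div_poly_lemma : ∀ (n : ℕ) (B : Polynomial ℂ), B.natDegree = n → B ≠ 0 →
    ∀ (A : Polynomial ℂ) (h : ℂ → ℂ), Continuous h →
    (∀ z, h z * B.eval z = A.eval z) → ∃ s : Polynomial ℂ, ∀ z, h z = s.eval z := by
  intro n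
  induction n using Nat.strong_induction_on with
  | _ n ih =>
    intro B hdeg hB0 A h hcont hmul
    rcases Nat.eq_zero_or_pos n with hn | hn
    · -- B is a nonzero constant
      have hB : B = C (B.coeff 0) := Polynomial.eq_C_of_natDegree_eq_zero (hdeg.trans hn)
      have hc0 : B.coeff 0 ≠ 0 := fun hc => hB0 (by rw [hB, hc, map_zero])
      refine ⟨C (B.coeff 0)⁻¹ * A, fun z => ?_⟩
      have := hmul z
      rw [hB] at this
      simp only [eval_C, eval_mul] at this ⊢
      field_simp
      linear_combination this
    · -- B has a root a
      have hdegB : B.degree ≠ 0 := by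
        rw [Polynomial.degree_eq_natDegree hB0, hdeg]
        exact_mod_cast hn.ne'
      obtain ⟨a, ha⟩ := Complex.isAlgClosed.exists_root B hdegB
      obtain ⟨B1, hB1⟩ := (Polynomial.dvd_iff_isRoot.mpr ha)
      have hB1ne : B1 ≠ 0 := fun hc => hB0 (by rw [hB1, hc, mul_zero])
      have hXa : (X - C a : Polynomial ℂ) ≠ 0 := Polynomial.X_sub_C_ne_zero a
      have hdeg1 : B1.natDegree = n - 1 := by
        have : B.natDegree = 1 + B1.natDegree := by
          rw [hB1, Polynomial.natDegree_mul hXa hB1ne, Polynomial.natDegree_X_sub_C]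
        omega
      have hlt : n - 1 < n := Nat.sub_lt hn one_pos
      have hmul1 : ∀ z, (h z * (z - a)) * B1.eval z = A.eval z := by
        intro z
        have := hmul z
        rw [hB1] at this
        simp only [eval_mul, eval_sub, eval_X, eval_C] at this
        linear_combination this
      obtain ⟨s1, hs1⟩ := ih (n - 1) hlt B1 hdeg1 hB1ne A (fun z => h z * (z - a))
        (hcont.mul (continuous_id.sub continuous_const)) hmul1
      -- s1 has root a, so s1 = (X - C a) * s
      have hroot : s1.IsRoot a := by
        have := hs1 a; simp at this; exact (Polynomial.IsRoot.def).mpr this.symm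
      obtain ⟨s, hs⟩ := Polynomial.dvd_iff_isRoot.mpr hroot
      refine ⟨s, ?_⟩
      have hEq : Set.EqOn h (fun z => s.eval z) ({a}ᶜ : Set ℂ) := by
        intro z hz
        have hzne : z - a ≠ 0 := sub_ne_zero.mpr hz
        have := hs1 z
        rw [hs] at this
        simp only [eval_mul, eval_sub, eval_X, eval_C] at this
        exact mul_right_cancel₀ hzne (by linear_combination this)
      have := Continuous.ext_on (dense_compl_singleton a) hcont
        (Polynomial.continuous s) hEq
      exact fun z => congrFun this z

/-- An entire function `f` on `ℂ` satisfying `exp (f z) = R z` for a rational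
function `R = p / q` on a nonempty connected open `D ⊆ ℂ` (with `q` nonvanishing
on `D`) must be constant on `D`; hence `R` is constant on `D`. -/
theorem exp_eq_rational_const (D : Set ℂ) (hD : IsOpen D) (hDconn : IsConnected D)
    (hne : D.Nonempty) (f : ℂ → ℂ) (hf : Differentiable ℂ f)
    (p q : Polynomial ℂ) (hq : ∀ z ∈ D, Polynomial.eval z q ≠ 0)
    (heq : ∀ z ∈ D, Complex.exp (f z) = Polynomial.eval z p / Polynomial.eval z q) :
    (∀ z ∈ D, ∀ w ∈ D, f z = f w) ∧
    (∀ z ∈ D, ∀ w ∈ D,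
      Polynomial.eval z p / Polynomial.eval z q
        = Polynomial.eval w p / Polynomial.eval w q) := by
  obtain ⟨z₀, hz₀⟩ := hne
  -- Step 1: identity theorem: exp (f z) * q z = p z everywhere
  set g : ℂ → ℂ := fun z => Complex.exp (f z) * q.eval z - p.eval z with hg
  have hgd : Differentiable ℂ g :=
    ((hf.cexp.mul (Polynomial.differentiable q))).sub (Polynomial.differentiable p)
  have hgan : AnalyticOnNhd ℂ g Set.univ :=
    hgd.differentiableOn.analyticOnNhd isOpen_univ
  have hg0 : g =ᶠ[nhds z₀] 0 := by
    filter_upwards [hD.mem_nhds hz₀] with z hz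
    have hqz := hq z hz
    have := heq z hz
    simp only [hg, Pi.zero_apply, sub_eq_zero, this]
    field_simp
  have hgzero : Set.EqOn g 0 Set.univ :=
    hgan.eqOn_zero_of_preconnected_of_eventuallyEq_zero isPreconnected_univ
      (Set.mem_univ z₀) hg0
  have hpq : ∀ z, Complex.exp (f z) * q.eval z = p.eval z := by
    intro z
    have := hgzero (Set.mem_univ z)
    simpa [hg, sub_eq_zero] using this
  have hq0 : q ≠ 0 := fun hc => hq z₀ hz₀ (by rw [hc, Polynomial.eval_zero])
  -- Step 2: exp ∘ f is a polynomial s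
  obtain ⟨s, hsev⟩ := div_poly_lemma q.natDegree q rfl hq0 p (fun z => Complex.exp (f z))
    (Complex.continuous_exp.comp hf.continuous) hpq
  -- Step 3: s is nonvanishing hence constant
  have hsne : ∀ z, s.eval z ≠ 0 := fun z => (hsev z) ▸ Complex.exp_ne_zero (f z)
  have hsC : s = C (s.coeff 0) := by
    by_contra hcon
    have hdegs : s.degree ≠ 0 := by
      intro hd
      exact hcon (Polynomial.eq_C_of_degree_le_zero hd.le)
    obtain ⟨a, ha⟩ := Complex.isAlgClosed.exists_root s hdegs
    exact hsne a ha
  have hc : ∀ z, Complex.exp (f z) = s.coeff 0 := by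
    intro z; rw [hsev z, hsC]; simp
  -- Step 4: deriv f = 0 everywhere
  have hderiv : ∀ z, deriv f z = 0 := by
    intro z
    have h1 : deriv (fun w => Complex.exp (f w)) z = Complex.exp (f z) * deriv f z :=
      ((hf z).hasDerivAt.cexp).deriv
    have h2 : (fun w => Complex.exp (f w)) = fun _ => s.coeff 0 := funext hc
    rw [h2, deriv_const] at h1
    exact (mul_eq_zero.mp h1.symm).resolve_left (Complex.exp_ne_zero _)
  have hconst : ∀ z w : ℂ, f z = f w := fun z w =>
    is_const_of_deriv_eq_zero hf hderiv z w
  refine ⟨fun z _ w _ => hconst z w, fun z hz w hw => ?_⟩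
  rw [← heq z hz, ← heq w hw, hconst z w]
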